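/- arXiv:2511.03389 — 3 statements merged into one kernel-verified Lean document; each statement's English description precedes it below -/
import Mathlib

section
/- Let $T : U \oplus W \to V$ be a linear isomorphism, $\dim U = m$, $\dim W = k$, $\dim V = m+k = n$, and fix a basis $v_1,\ldots,v_n$ of $V$. Then there exists a subset $E \subseteq \{1,\ldots,n\}$ with $|E| = m$ such that $\pi_E \circ T|_U : U \to V_E$ and $\pi_{\overline{E}} \circ T|_W : W \to V_{\overline{E}}$ are both isomorphisms. -/
/-! Transport the basis to `U × W` and split each basis vector as `w i = (a i, 0) + (0, b i)`.
Expanding `det_w w = 1` multilinearly over this splitting gives a subset `s` such that the family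
`(a i, 0)_{i ∈ s}, (0, b i)_{i ∉ s}` has nonzero determinant, so `a` is linearly independent
on `s` and `b` on `sᶜ`; counting dimensions forces `|s| = dim U` and `|sᶜ| = dim W`. If the
coordinates of `(u, 0)` vanish on `s`, then `0 = Σ_{i ∉ s} u_i b i`, so all of them
vanish. -/

namespace Module.Basis

variable {ι : Type*}

theorem eq_zero_of_linearIndepOn_map {R M M' : Type*} [Ring R] [AddCommGroup M] [Module R M]
    [AddCommGroup M'] [Module R M'] (v : Basis ι R M) (f : M →ₗ[R] M') {t : Set ι}
    (ht : LinearIndepOn R (f ∘ v) t) {x : M} (hx : f x = 0)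
    (hsupp : ∀ i ∉ t, v.repr x i = 0) : x = 0 := by
  have hrepr : v.repr x ∈ Finsupp.supported R R t := fun i hi => by
    by_contra h
    exact Finsupp.mem_support_iff.mp hi (hsupp i h)
  have : Finsupp.linearCombination R (f ∘ v) (v.repr x) = 0 := by
    rw [← Finsupp.apply_linearCombination, v.linearCombination_repr, hx]
  simpa using linearIndepOn_iff.mp ht _ hrepr this

variable {K V : Type*} [Field K] [AddCommGroup V] [Module K V]

theorem exists_linearIndependent_piecewise [Fintype ι] [DecidableEq ι] (v : Basis ι K V)
    (a b : ι → V) (hab : a + b = v) :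
    ∃ s : Finset ι, LinearIndependent K (s.piecewise a b) := by
  have hsum : ∑ s : Finset ι, v.det (s.piecewise a b) ≠ 0 := by
    have hexpand : v.det (a + b) = ∑ s : Finset ι, v.det (s.piecewise a b) :=
      v.det.toMultilinearMap.map_add_univ a b
    rw [← hexpand, hab, v.det_self]
    exact one_ne_zero
  obtain ⟨s, -, hs⟩ := Finset.exists_ne_zero_of_sum_ne_zero hsum
  exact ⟨s, (v.is_basis_iff_det.mpr (isUnit_iff_ne_zero.mpr hs)).1⟩

theorem bijective_coords_of_linearIndepOn {N V' : Type*} [AddCommGroup N] [Module K N]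
    [AddCommGroup V'] [Module K V'] [Finite ι] (v : Basis ι K V)
    {g : N →ₗ[K] V} (hg : Function.Injective g) (f : V →ₗ[K] V') (hfg : ∀ x, f (g x) = 0)
    {s : Finset ι} (hs : LinearIndepOn K (f ∘ v) (↑s)ᶜ) (hcard : s.card = finrank K N) :
    Function.Bijective (fun x (j : s) => v.repr (g x) j) := by
  have : Module.Finite K V := .of_basis v
  have : Module.Finite K N := .of_injective g hg
  let φ : N →ₗ[K] (s → K) := LinearMap.pi fun j => v.coord j ∘ₗ g
  have hinj : Function.Injective φ := by
    refine (injective_iff_map_eq_zero φ).mpr fun x hx => hg ?_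
    rw [map_zero]
    refine v.eq_zero_of_linearIndepOn_map f hs (hfg x) fun i hi => ?_
    simpa [φ] using congr_fun hx ⟨i, by simpa using hi⟩
  have hdim : finrank K N = finrank K (s → K) := by
    rw [finrank_fintype_fun_eq_card, Fintype.card_coe, hcard]
  exact ⟨hinj, (LinearMap.injective_iff_surjective_of_finrank_eq_finrank hdim).mp hinj⟩

variable {U W : Type*} [AddCommGroup U] [Module K U] [AddCommGroup W] [Module K W]

theorem exists_finset_linearIndepOn_fst_snd [Fintype ι] [DecidableEq ι]
    (w : Basis ι K (U × W)) :
    ∃ s : Finset ι, LinearIndepOn K (LinearMap.fst K U W ∘ w) s ∧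
      LinearIndepOn K (LinearMap.snd K U W ∘ w) (↑s)ᶜ := by
  obtain ⟨s, hs⟩ := w.exists_linearIndependent_piecewise (fun i => ((w i).1, 0))
    (fun i => (0, (w i).2)) (by ext <;> simp)
  refine ⟨s, LinearIndepOn.of_comp (LinearMap.inl K U W) ?_,
    LinearIndepOn.of_comp (LinearMap.inr K U W) ?_⟩
  · refine (hs.linearIndepOn _).congr fun i hi => ?_
    simp [Finset.piecewise_eq_of_mem _ _ _ (Finset.mem_coe.mp hi)]
  · refine (hs.linearIndepOn _).congr fun i hi => ?_
    simp [Finset.piecewise_eq_of_notMem _ _ _ (by simpa using hi)]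

theorem card_eq_finrank_of_linearIndepOn_fst_snd [Fintype ι] [DecidableEq ι]
    (w : Basis ι K (U × W)) {s : Finset ι} (hU : LinearIndepOn K (LinearMap.fst K U W ∘ w) s)
    (hW : LinearIndepOn K (LinearMap.snd K U W ∘ w) (↑s)ᶜ) :
    s.card = finrank K U ∧ sᶜ.card = finrank K W := by
  have : Module.Finite K (U × W) := .of_basis w
  have : Module.Finite K U := .of_surjective (LinearMap.fst K U W) LinearMap.fst_surjective
  have : Module.Finite K W := .of_surjective (LinearMap.snd K U W) LinearMap.snd_surjective
  have hleU : s.card ≤ finrank K U := by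
    simpa using LinearIndependent.fintype_card_le_finrank hU
  have hleW : sᶜ.card ≤ finrank K W := by
    rw [← Finset.coe_compl] at hW
    simpa only [Finset.coe_sort_coe, Fintype.card_coe] using
      LinearIndependent.fintype_card_le_finrank hW
  have htotal : s.card + sᶜ.card = finrank K U + finrank K W := by
    rw [Finset.card_add_card_compl, ← finrank_eq_card_basis w, finrank_prod]
  omega

theorem exists_finset_bijective_coords_prod [Fintype ι] [DecidableEq ι]
    (w : Basis ι K (U × W)) :
    ∃ s : Finset ι, s.card = finrank K U ∧
      Function.Bijective (fun (u : U) (j : s) => w.repr (u, 0) j) ∧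
      Function.Bijective (fun (x : W) (j : ↥sᶜ) => w.repr (0, x) j) := by
  obtain ⟨s, hU, hW⟩ := w.exists_finset_linearIndepOn_fst_snd
  obtain ⟨hcardU, hcardW⟩ := w.card_eq_finrank_of_linearIndepOn_fst_snd hU hW
  refine ⟨s, hcardU, w.bijective_coords_of_linearIndepOn LinearMap.inl_injective
    (LinearMap.snd K U W) (fun _ => rfl) hW hcardU,
    w.bijective_coords_of_linearIndepOn LinearMap.inr_injective
    (LinearMap.fst K U W) (fun _ => rfl) ?_ hcardW⟩
  rwa [Finset.coe_compl, compl_compl]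

end Module.Basis

theorem stmt1_general {K : Type*} [Field K]
    {U W V : Type*} [AddCommGroup U] [Module K U] [AddCommGroup W] [Module K W]
    [AddCommGroup V] [Module K V]
    {m n : ℕ} (hU : Module.finrank K U = m)
    (T : (U × W) ≃ₗ[K] V) (v : Module.Basis (Fin n) K V) :
    ∃ E : Finset (Fin n), E.card = m ∧
      Function.Bijective (fun (u : U) => fun j : E => v.repr (T (u, 0)) j) ∧
      Function.Bijective (fun (w : W) => fun j : (Eᶜ : Finset (Fin n)) => v.repr (T (0, w)) j) := by
  obtain ⟨E, hE, hUbij, hWbij⟩ := (v.map T.symm).exists_finset_bijective_coords_prod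
  exact ⟨E, hE.trans hU, by simpa using hUbij, by simpa using hWbij⟩

/-- Given a linear isomorphism `T : U × W ≃ V` with `dim U = m`, `dim W = k`,
`dim V = m + k = n`, and a basis `v` of `V` indexed by `Fin n`, there is a subset
`E ⊆ {1,…,n}` with `|E| = m` such that the composition of `T|_U` with the coordinate
projection `π_E` onto the span of `{v j : j ∈ E}` is an isomorphism, and likewise
`π_{Eᶜ} ∘ T|_W` is an isomorphism. (The projections are expressed in coordinates:
`u ↦ (v.repr (T (u,0)) j)_{j ∈ E}`.) -/
theorem stmt1 {K : Type*} [Field K]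
    {U W V : Type*} [AddCommGroup U] [Module K U] [AddCommGroup W] [Module K W]
    [AddCommGroup V] [Module K V]
    {m k n : ℕ} (hU : Module.finrank K U = m) (hW : Module.finrank K W = k)
    (hn : m + k = n)
    (T : (U × W) ≃ₗ[K] V) (v : Module.Basis (Fin n) K V) :
    ∃ E : Finset (Fin n), E.card = m ∧
      Function.Bijective (fun (u : U) => fun j : E => v.repr (T (u, 0)) j) ∧
      Function.Bijective (fun (w : W) => fun j : (Eᶜ : Finset (Fin n)) => v.repr (T (0, w)) j) :=
  stmt1_general hU T v
end

section
/- Let $K$ be a field and $P \subseteq S = K[z_1,\ldots,z_N]$ a homogeneous prime ideal. If $z_i$ is a coloop of the algebraic matroid $M(P)$, then $P$ is generated by the elimination ideal $P \cap K[z_1,\ldots,\hat{z_i},\ldots,z_N]$; in particular, $P$ has a generating set of polynomials not involving $z_i$. -/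
/-!
In `A = S ⧸ P` write `x j` for the image of `z j`. A maximal algebraically independent subfamily
of `(x j)_{j ≠ i}` makes every `x j` with `j ≠ i` algebraic over it, so if `x i` were algebraic
over `K[x j | j ≠ i]` that subfamily would be a basis of the matroid avoiding `i`. Hence `x i` is
transcendental over `K[x j | j ≠ i]`. Expanding `f ∈ P` in powers of `z i` with coefficients in
`K[z j | j ≠ i]` gives a polynomial relation for `x i`, so every coefficient already lies in `P`.
-/

open MvPolynomial Algebra

/-- A set of variables `E` is independent in the algebraic matroid of `P` if `P`
contains no nonzero polynomial supported on `E`, i.e. `P ∩ K[E] = 0`. -/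
def AlgIndep {K : Type*} [Field K] {N : ℕ}
    (P : Ideal (MvPolynomial (Fin N) K)) (E : Finset (Fin N)) : Prop :=
  ∀ f ∈ P, f.vars ⊆ E → f = 0

theorem transcendental_adjoin_image_compl_of_mem_maximal_indep {R A ι : Type*} [CommRing R]
    [CommRing A] [Algebra R A] [FaithfulSMul R A] [NoZeroDivisors A] [Finite ι] [DecidableEq ι]
    {x : ι → A} {i : ι}
    (h : ∀ B : Finset ι, AlgebraicIndepOn R x B →
      (∀ j ∉ B, ¬ AlgebraicIndepOn R x (insert j B : Finset ι)) → i ∈ B) :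
    Transcendental (adjoin R (x '' {i}ᶜ)) (x i) := by
  intro halg
  have := halg.nontrivial
  have : Nontrivial A := (adjoin R (x '' {i}ᶜ)).subtype_injective.nontrivial
  obtain ⟨B, ⟨hiB, hB⟩, hBmax⟩ : ∃ B : Finset ι,
      Maximal (fun B : Finset ι ↦ i ∉ B ∧ AlgebraicIndepOn R x B) B :=
    Set.Finite.exists_maximal (Set.toFinite _)
      ⟨∅, Finset.notMem_empty i, by
        simpa [AlgebraicIndepOn] using FaithfulSMul.algebraMap_injective R A⟩
  have dependent : ∀ j ∉ B, IsAlgebraic (adjoin R (x '' B)) (x j) →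
      ¬ AlgebraicIndepOn R x (insert j B : Finset ι) := fun j hj hx hind ↦
    ((AlgebraicIndepOn.insert_iff (by exact_mod_cast hj)).mp (by simpa using hind)).2 hx
  have algebraic : ∀ j ≠ i, IsAlgebraic (adjoin R (x '' B)) (x j) := by
    intro j hji
    by_cases hj : j ∈ B
    · exact isAlgebraic_algebraMap (⟨x j, subset_adjoin ⟨j, hj, rfl⟩⟩ : adjoin R (x '' B))
    by_contra htr
    have := hBmax (y := insert j B) ⟨by simp [hji.symm, hiB],
      by simpa using hB.insert htr⟩ (Finset.subset_insert j B)
    exact hj (this (Finset.mem_insert_self j B))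
  refine hiB (h B hB fun j hj ↦ dependent j hj ?_)
  obtain rfl | hji := eq_or_ne j i
  · refine halg.adjoin_of_forall_isAlgebraic ?_
    rintro _ ⟨⟨k, hk, rfl⟩, -⟩
    exact algebraic k hk
  · exact algebraic j hji

namespace MvPolynomial

variable {R σ : Type*} [CommRing R]

theorem aeval_mk_X (I : Ideal (MvPolynomial σ R)) (p : MvPolynomial σ R) :
    aeval (fun j ↦ Ideal.Quotient.mk I (X j)) p = Ideal.Quotient.mk I p := by
  simpa using (congrArg (· p) (comp_aeval (R := R) X (Ideal.Quotient.mkₐ R I))).symm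

theorem map_supported {A : Type*} [CommRing A] [Algebra R A] (φ : MvPolynomial σ R →ₐ[R] A)
    (s : Set σ) : (supported R s).map φ = adjoin R ((fun j ↦ φ (X j)) '' s) := by
  rw [supported_eq_adjoin_X, AlgHom.map_adjoin, Set.image_image]

theorem exists_aeval_X_eq (i : σ) (f : MvPolynomial σ R) :
    ∃ p : Polynomial (supported R ({i}ᶜ : Set σ)), Polynomial.aeval (X i) p = f := by
  have htop : (adjoin (supported R ({i}ᶜ : Set σ)) {(X i : MvPolynomial σ R)}).restrictScalars R
      = ⊤ := by
    rw [supported_eq_adjoin_X, ← adjoin_union_eq_adjoin_adjoin, ← Set.image_singleton,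
      ← Set.image_union, Set.compl_union_self, Set.image_univ, adjoin_range_X]
  have hf : f ∈ (adjoin (supported R ({i}ᶜ : Set σ)) {X i}).restrictScalars R := htop ▸ trivial
  rwa [Subalgebra.mem_restrictScalars, adjoin_singleton_eq_range_aeval] at hf

theorem ker_eq_span_of_transcendental {A : Type*} [CommRing A] [Algebra R A]
    (φ : MvPolynomial σ R →ₐ[R] A) (i : σ)
    (h : Transcendental (adjoin R ((fun j ↦ φ (X j)) '' {i}ᶜ)) (φ (X i))) :
    RingHom.ker φ = Ideal.span {f | f ∈ RingHom.ker φ ∧ i ∉ f.vars} := by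
  set R₀ := supported R ({i}ᶜ : Set σ)
  set S := adjoin R ((fun j ↦ φ (X j)) '' {i}ᶜ)
  let ψ : R₀ →ₐ[R] S := (φ.comp R₀.val).codRestrict S fun c ↦
    (map_supported φ _).le ⟨c, c.2, rfl⟩
  have hψ : ∀ p : Polynomial R₀,
      φ (Polynomial.aeval (X i) p) = Polynomial.aeval (φ (X i)) (p.map ψ.toRingHom) := by
    intro p
    rw [Polynomial.aeval_def, Polynomial.aeval_def, Polynomial.eval₂_map]
    exact Polynomial.hom_eval₂ p _ φ.toRingHom _
  refine le_antisymm (fun f hf ↦ ?_) (Ideal.span_le.mpr fun f hf ↦ hf.1)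
  obtain ⟨p, rfl⟩ := exists_aeval_X_eq i f
  have hp : p.map ψ.toRingHom = 0 :=
    transcendental_iff.mp h _ (by rw [← hψ]; exact hf)
  rw [Polynomial.aeval_eq_sum_range]
  refine Ideal.sum_mem _ fun k _ ↦ Ideal.mul_mem_right _ _ (Ideal.subset_span ⟨?_, ?_⟩)
  · have : ψ (p.coeff k) = 0 := by simpa using congrArg (Polynomial.coeff · k) hp
    exact congrArg Subtype.val this
  · exact fun hi ↦ mem_supported.mp (p.coeff k).2 hi rfl

end MvPolynomial

theorem algIndep_iff_algebraicIndepOn {K : Type*} [Field K] {N : ℕ}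
    (P : Ideal (MvPolynomial (Fin N) K)) (E : Finset (Fin N)) :
    AlgIndep P E ↔ AlgebraicIndepOn K (fun j ↦ Ideal.Quotient.mk P (X j)) E := by
  refine Iff.trans ?_ (algebraicIndependent_comp_subtype (R := K)
    (x := fun j ↦ Ideal.Quotient.mk P (X j)) (s := (E : Set (Fin N)))).symm
  simp only [mem_supported, aeval_mk_X, Ideal.Quotient.eq_zero_iff_mem, Finset.coe_subset]
  exact forall_congr' fun _ ↦ forall_comm

theorem stmt4_general {K : Type*} [Field K] {N : ℕ}
    (P : Ideal (MvPolynomial (Fin N) K)) (hP : P.IsPrime)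
    (i : Fin N)
    (hcoloop : ∀ B : Finset (Fin N),
      (AlgIndep P B ∧ ∀ j ∉ B, ¬ AlgIndep P (insert j B)) → i ∈ B) :
    P = Ideal.span {f : MvPolynomial (Fin N) K | f ∈ P ∧ i ∉ f.vars} := by
  have : IsDomain (MvPolynomial (Fin N) K ⧸ P) := (Ideal.Quotient.isDomain_iff_prime P).mpr hP
  have := (faithfulSMul_iff_algebraMap_injective K (MvPolynomial (Fin N) K ⧸ P)).mpr
    (algebraMap K _).injective
  have htr := transcendental_adjoin_image_compl_of_mem_maximal_indep (R := K)
    (x := fun j ↦ Ideal.Quotient.mk P (X j)) fun B hB hmax ↦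
      hcoloop B ⟨(algIndep_iff_algebraicIndepOn P B).mpr hB,
        fun j hj ↦ (algIndep_iff_algebraicIndepOn P _).not.mpr (hmax j hj)⟩
  rw [← Ideal.Quotient.mkₐ_ker K P]
  exact MvPolynomial.ker_eq_span_of_transcendental _ i htr

/-- If `z i` is a coloop of the algebraic matroid of a homogeneous prime ideal `P`
(i.e. `z i` lies in every basis, a basis being a maximal independent set), then `P` is
generated by its elimination ideal `P ∩ K[z_1,…,ẑᵢ,…,z_N]`; in particular `P` has a
generating set of polynomials not involving `z i`. -/
theorem stmt4 {K : Type*} [Field K] {N : ℕ}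
    (P : Ideal (MvPolynomial (Fin N) K)) (hP : P.IsPrime)
    (hhom : ∃ G : Set (MvPolynomial (Fin N) K),
      P = Ideal.span G ∧ ∀ g ∈ G, ∃ d, g.IsHomogeneous d)
    (i : Fin N)
    (hcoloop : ∀ B : Finset (Fin N),
      (AlgIndep P B ∧ ∀ j ∉ B, ¬ AlgIndep P (insert j B)) → i ∈ B) :
    P = Ideal.span {f : MvPolynomial (Fin N) K | f ∈ P ∧ i ∉ f.vars} :=
  stmt4_general P hP i hcoloop
end

section
/- Let $K$ be an algebraically closed field of characteristic zero, $X_1,\ldots,X_s \subseteq \mathbb{A}^N_K$ irreducible affine cones with join $X$, and suppose $B$ is a basis of $M(X_1) \vee \cdots \vee M(X_s)$ such that the join $\overline{\pi_B(X_1)} + \cdots + \overline{\pi_B(X_s)} \subseteq K^B$ is defective (has dimension strictly less than $\min\{|B|, \sum_i \dim \overline{\pi_B(X_i)}\}$). Then $B$ is dependent in $M(X)$, and hence $M(X) \neq M(X_1) \vee \cdots \vee M(X_s)$. -/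
open MvPolynomial

/-- The Zariski closure of a subset of affine space. -/
def zClosure {K : Type*} [Field K] {σ : Type*} (S : Set (σ → K)) : Set (σ → K) :=
  {x | ∀ f : MvPolynomial σ K, (∀ y ∈ S, eval y f = 0) → eval x f = 0}

/-- The vanishing ideal of a subset of affine space. -/
def vIdeal {K : Type*} [Field K] {σ : Type*} (S : Set (σ → K)) :
    Ideal (MvPolynomial σ K) where
  carrier := {f | ∀ x ∈ S, eval x f = 0}
  add_mem' ha hb := fun x hx => by simp [ha x hx, hb x hx]
  zero_mem' := fun x hx => by simp
  smul_mem' c a ha := fun x hx => by simp [ha x hx]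

/-- The dimension of a subset of affine space: the Krull dimension of its coordinate
ring. -/
noncomputable def varDim {K : Type*} [Field K] {σ : Type*} (S : Set (σ → K)) :
    WithBot ℕ∞ :=
  ringKrullDim (MvPolynomial σ K ⧸ vIdeal S)

/-- A set of variables `E` is independent in the algebraic matroid `M(S)`. -/
def SIndep {K : Type*} [Field K] {N : ℕ} (S : Set (Fin N → K))
    (E : Finset (Fin N)) : Prop :=
  ∀ f : MvPolynomial (Fin N) K, (∀ x ∈ S, eval x f = 0) → f.vars ⊆ E → f = 0

/-!
If `B` were independent in `M(J)`, no nonzero polynomial in the variables `B` would vanish on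
the join, hence none on its projection to `K^B`, which is contained in the join of the closed
projections. That join would then have vanishing ideal `⊥` and dimension `dim K[B] = |B|`,
while defectiveness makes its dimension smaller than `|B|`. Since `B` is independent in the
matroid union, the two matroids differ.
-/

section

variable {K : Type*} [Field K] {σ : Type*}

/-- The set of sums `∑ i, y i` with `y i ∈ Y i`; the join of the `Y i` is its Zariski
closure. -/
def varJoin {ι : Type*} [Fintype ι] (Y : ι → Set (σ → K)) : Set (σ → K) :=
  {x | ∃ g : ι → σ → K, (∀ i, g i ∈ Y i) ∧ x = ∑ i, g i}

theorem varJoin_mono {ι : Type*} [Fintype ι] {Y Y' : ι → Set (σ → K)}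
    (h : ∀ i, Y i ⊆ Y' i) : varJoin Y ⊆ varJoin Y' := by
  rintro _ ⟨g, hg, rfl⟩
  exact ⟨g, fun i => h i (hg i), rfl⟩

theorem image_varJoin_subset {τ ι : Type*} [Fintype ι] (e : τ → σ) (Y : ι → Set (σ → K)) :
    (fun (x : σ → K) (j : τ) => x (e j)) '' varJoin Y ⊆
      varJoin fun i => (fun (x : σ → K) (j : τ) => x (e j)) '' Y i := by
  rintro _ ⟨_, ⟨g, hg, rfl⟩, rfl⟩
  exact ⟨fun i j => g i (e j), fun i => ⟨g i, hg i, rfl⟩, by ext; simp [Finset.sum_apply]⟩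

theorem subset_zClosure (S : Set (σ → K)) : S ⊆ zClosure S :=
  fun x hx _ hf => hf x hx

theorem vIdeal_anti {S T : Set (σ → K)} (h : S ⊆ T) : vIdeal T ≤ vIdeal S :=
  fun _ hf x hx => hf x (h hx)

theorem vIdeal_zClosure (S : Set (σ → K)) : vIdeal (zClosure S) = vIdeal S :=
  le_antisymm (vIdeal_anti (subset_zClosure S)) fun _ hf _ hx => hx _ hf

theorem varDim_eq_card_of_vIdeal_eq_bot [Finite σ] {S : Set (σ → K)} (h : vIdeal S = ⊥) :
    varDim S = Nat.card σ := by
  rw [varDim, h, ringKrullDim_eq_of_ringEquiv (RingEquiv.quotientBot _),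
    MvPolynomial.ringKrullDim_of_isNoetherianRing, ringKrullDim_eq_zero_of_field, zero_add]

end

section

variable {K : Type*} [Field K] {N : ℕ}

theorem SIndep.of_zClosure {S : Set (Fin N → K)} {E : Finset (Fin N)}
    (h : SIndep (zClosure S) E) : SIndep S E :=
  fun f hf => h f fun _ hx => hx f hf

theorem SIndep.vIdeal_image_eq_bot {S : Set (Fin N → K)} {E : Finset (Fin N)}
    (h : SIndep S E) : vIdeal ((fun (x : Fin N → K) (j : E) => x j) '' S) = ⊥ := by
  refine eq_bot_iff.2 fun f hf => ?_
  have hvanish : ∀ x ∈ S, eval x (rename Subtype.val f) = 0 := fun x hx => by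
    rw [eval_rename]
    exact hf _ ⟨x, hx, rfl⟩
  have hvars : (rename Subtype.val f).vars ⊆ E := fun a ha => by
    obtain ⟨b, -, rfl⟩ := Finset.mem_image.mp (vars_rename Subtype.val f ha)
    exact b.2
  exact rename_injective _ Subtype.val_injective ((h _ hvanish hvars).trans (map_zero _).symm)

end

theorem stmt13_general {K : Type*} [Field K] {N s : ℕ}
    (X : Fin s → Set (Fin N → K))
    (J : Set (Fin N → K))
    (hJ : J = zClosure {x | ∃ g : Fin s → (Fin N → K),
      (∀ i, g i ∈ X i) ∧ x = ∑ i, g i})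
    (B : Finset (Fin N))
    -- `B` is independent in the matroid union:
    (hBindep : ∃ F : Fin s → Finset (Fin N),
      B = Finset.univ.biUnion F ∧ ∀ i, SIndep (X i) (F i))
    -- the projected join is defective:
    (hdef : varDim (zClosure {y : B → K | ∃ g : Fin s → (B → K),
        (∀ i, g i ∈ zClosure ((fun (x : Fin N → K) (j : B) => x j) '' X i)) ∧
        y = ∑ i, g i}) <
      min ((B.card : WithBot ℕ∞))
        (∑ i, varDim (zClosure ((fun (x : Fin N → K) (j : B) => x j) '' X i)))) :
    ¬ SIndep J B ∧
    ¬ (∀ E : Finset (Fin N), SIndep J E ↔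
        ∃ F : Fin s → Finset (Fin N),
          E = Finset.univ.biUnion F ∧ ∀ i, SIndep (X i) (F i)) := by
  have hdep : ¬ SIndep J B := by
    intro hind
    change J = zClosure (varJoin X) at hJ
    change varDim (zClosure (varJoin fun i => zClosure (_ '' X i))) < _ at hdef
    have hbot : vIdeal (zClosure (varJoin fun i =>
        zClosure ((fun (x : Fin N → K) (j : B) => x j) '' X i))) = ⊥ := by
      rw [vIdeal_zClosure, eq_bot_iff]
      refine (vIdeal_anti ?_).trans (hJ ▸ hind).of_zClosure.vIdeal_image_eq_bot.le
      exact (image_varJoin_subset _ X).trans (varJoin_mono fun i => subset_zClosure _)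
    rw [varDim_eq_card_of_vIdeal_eq_bot hbot, Nat.card_eq_finsetCard] at hdef
    exact (hdef.trans_le (min_le_left _ _)).false
  exact ⟨hdep, fun hiff => hdep ((hiff B).mpr hBindep)⟩

/-- One direction of the Union Theorem: if `B` is a basis of the matroid union
`M(X 0) ∨ ⋯ ∨ M(X (s-1))` of irreducible affine cones such that the projected join
`cl(π_B(X 0)) + ⋯ + cl(π_B(X (s-1))) ⊆ K^B` is defective, then `B` is dependent in the
algebraic matroid of the join `J`, and hence `M(J)` is not the matroid union (not a
Terracini union). -/
theorem stmt13 {K : Type*} [Field K] [IsAlgClosed K] [CharZero K] {N s : ℕ}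
    (X : Fin s → Set (Fin N → K))
    (hX : ∀ i, ∃ P : Ideal (MvPolynomial (Fin N) K), P.IsPrime ∧
      (∃ G : Set (MvPolynomial (Fin N) K),
        P = Ideal.span G ∧ ∀ g ∈ G, ∃ d, g.IsHomogeneous d) ∧
      X i = {x | ∀ f ∈ P, eval x f = 0})
    (J : Set (Fin N → K))
    (hJ : J = zClosure {x | ∃ g : Fin s → (Fin N → K),
      (∀ i, g i ∈ X i) ∧ x = ∑ i, g i})
    (B : Finset (Fin N))
    -- `B` is independent in the matroid union:
    (hBindep : ∃ F : Fin s → Finset (Fin N),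
      B = Finset.univ.biUnion F ∧ ∀ i, SIndep (X i) (F i))
    -- `B` is maximal such, i.e. a basis of the matroid union:
    (hBmax : ∀ j ∉ B, ¬ ∃ F : Fin s → Finset (Fin N),
      insert j B = Finset.univ.biUnion F ∧ ∀ i, SIndep (X i) (F i))
    -- the projected join is defective:
    (hdef : varDim (zClosure {y : B → K | ∃ g : Fin s → (B → K),
        (∀ i, g i ∈ zClosure ((fun (x : Fin N → K) (j : B) => x j) '' X i)) ∧
        y = ∑ i, g i}) <
      min ((B.card : WithBot ℕ∞))
        (∑ i, varDim (zClosure ((fun (x : Fin N → K) (j : B) => x j) '' X i)))) :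
    ¬ SIndep J B ∧
    ¬ (∀ E : Finset (Fin N), SIndep J E ↔
        ∃ F : Fin s → Finset (Fin N),
          E = Finset.univ.biUnion F ∧ ∀ i, SIndep (X i) (F i)) :=
  stmt13_general X J hJ B hBindep hdef
end
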